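/- arXiv:2403.14028 — 7 statements merged into one kernel-verified Lean document; each statement's English description precedes it below -/
import Mathlib

section
/- For every p : ι → ℝ with 0 ≤ p(i) ≤ 1 for all i, the joint detection set function P_J(S) = 1 − ∏_{i∈S}(1 − p(i)) is a polymatroid set function: P_J(∅) = 0, P_J(B) ≤ P_J(A) whenever B ⊆ A, and P_J(A ∪ B) + P_J(A ∩ B) ≤ P_J(A) + P_J(B) for all finite A, B ⊆ ι. -/
/-- the joint detection set function `P_J(S) = 1 - ∏_{i∈S}(1 - p i)`
is a polymatroid set function (normalized, monotone, submodular). -/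
theorem jointDetection_polymatroid {ι : Type*} [DecidableEq ι] [Fintype ι]
    (p : ι → ℝ) (hp : ∀ i, 0 ≤ p i ∧ p i ≤ 1) :
    (1 - ∏ i ∈ (∅ : Finset ι), (1 - p i)) = 0 ∧
    (∀ A B : Finset ι, B ⊆ A →
      1 - ∏ i ∈ B, (1 - p i) ≤ 1 - ∏ i ∈ A, (1 - p i)) ∧
    (∀ A B : Finset ι,
      (1 - ∏ i ∈ A ∪ B, (1 - p i)) + (1 - ∏ i ∈ A ∩ B, (1 - p i)) ≤
        (1 - ∏ i ∈ A, (1 - p i)) + (1 - ∏ i ∈ B, (1 - p i))) := by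
  have h0 : ∀ S : Finset ι, 0 ≤ ∏ i ∈ S, (1 - p i) := fun S =>
    Finset.prod_nonneg fun i _ => by linarith [(hp i).2]
  have h1 : ∀ S : Finset ι, ∏ i ∈ S, (1 - p i) ≤ 1 := fun S =>
    Finset.prod_le_one (fun i _ => by linarith [(hp i).2]) (fun i _ => by linarith [(hp i).1])
  have mono : ∀ A B : Finset ι, B ⊆ A →
      ∏ i ∈ A, (1 - p i) ≤ ∏ i ∈ B, (1 - p i) := by
    intro A B hBA
    rw [← Finset.prod_sdiff hBA]
    calc (∏ i ∈ A \ B, (1 - p i)) * ∏ i ∈ B, (1 - p i)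
        ≤ 1 * ∏ i ∈ B, (1 - p i) := by
          apply mul_le_mul_of_nonneg_right (h1 _) (h0 _)
      _ = ∏ i ∈ B, (1 - p i) := one_mul _
  refine ⟨by simp, fun A B hBA => by linarith [mono A B hBA], ?_⟩
  intro A B
  have hu : A ∪ B = A ∪ (B \ A) := by
    rw [Finset.union_sdiff_self_eq_union]
  have hd1 : Disjoint A (B \ A) := Finset.disjoint_sdiff
  have hsub : A ∩ B ⊆ B := Finset.inter_subset_right
  have hB : B = (A ∩ B) ∪ (B \ A) := by
    ext x; simp [Finset.mem_union, Finset.mem_inter, Finset.mem_sdiff]; tauto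
  have hd2 : Disjoint (A ∩ B) (B \ A) := by
    rw [Finset.disjoint_left]; intro x hx hx'
    exact (Finset.mem_sdiff.mp hx').2 (Finset.mem_inter.mp hx).1
  have eu : ∏ i ∈ A ∪ B, (1 - p i) =
      (∏ i ∈ A, (1 - p i)) * ∏ i ∈ B \ A, (1 - p i) := by
    rw [hu, Finset.prod_union hd1]
  have eb : ∏ i ∈ B, (1 - p i) =
      (∏ i ∈ A ∩ B, (1 - p i)) * ∏ i ∈ B \ A, (1 - p i) := by
    conv_lhs => rw [hB]
    rw [Finset.prod_union hd2]
  have hac : ∏ i ∈ A, (1 - p i) ≤ ∏ i ∈ A ∩ B, (1 - p i) :=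
    mono A (A ∩ B) Finset.inter_subset_left
  have ht1 : ∏ i ∈ B \ A, (1 - p i) ≤ 1 := h1 _
  nlinarith [eu, eb, hac, ht1, h0 (B \ A), h0 A, h0 (A ∩ B)]
end

section
/- Fix a finite set B ⊆ ι. The set function G_B(A) := P_J(A) + P_J(B) − P_J(A ∪ B), defined on finite sets A ⊆ ι \ B, is a polymatroid set function: G_B(∅) = 0, G_B(A₁) ≤ G_B(A₂) whenever A₁ ⊆ A₂ ⊆ ι \ B, and G_B(A₁ ∪ A₂) + G_B(A₁ ∩ A₂) ≤ G_B(A₁) + G_B(A₂) for all finite A₁, A₂ ⊆ ι \ B. -/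
/-- The joint detection set function `P_J(S) = 1 - ∏_{i∈S}(1 - p i)`. -/
noncomputable def jointDetection {ι : Type*} (p : ι → ℝ) (S : Finset ι) : ℝ :=
  1 - ∏ i ∈ S, (1 - p i)

section Aux
variable {ι : Type*} [DecidableEq ι] (p : ι → ℝ)

private lemma q_nonneg (hp : ∀ i, 0 ≤ p i ∧ p i ≤ 1) (S : Finset ι) :
    0 ≤ ∏ i ∈ S, (1 - p i) :=
  Finset.prod_nonneg fun i _ => by linarith [(hp i).2]

private lemma q_le_one (hp : ∀ i, 0 ≤ p i ∧ p i ≤ 1) (S : Finset ι) :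
    ∏ i ∈ S, (1 - p i) ≤ 1 :=
  Finset.prod_le_one (fun i _ => by linarith [(hp i).2]) (fun i _ => by linarith [(hp i).1])

private lemma q_anti (hp : ∀ i, 0 ≤ p i ∧ p i ≤ 1) {S T : Finset ι} (h : S ⊆ T) :
    ∏ i ∈ T, (1 - p i) ≤ ∏ i ∈ S, (1 - p i) := by
  rw [← Finset.prod_sdiff h]
  calc (∏ i ∈ T \ S, (1 - p i)) * ∏ i ∈ S, (1 - p i)
      ≤ 1 * ∏ i ∈ S, (1 - p i) :=
        mul_le_mul_of_nonneg_right (q_le_one p hp _) (q_nonneg p hp _)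
    _ = ∏ i ∈ S, (1 - p i) := one_mul _

private lemma G_eq (hp : ∀ i, 0 ≤ p i ∧ p i ≤ 1) {A B : Finset ι} (h : Disjoint A B) :
    jointDetection p A + jointDetection p B - jointDetection p (A ∪ B) =
      (1 - ∏ i ∈ B, (1 - p i)) * (1 - ∏ i ∈ A, (1 - p i)) := by
  simp only [jointDetection, Finset.prod_union h]
  ring

end Aux

/-- for a fixed finite `B`, the set function
`G_B(A) = P_J(A) + P_J(B) − P_J(A ∪ B)` on subsets `A ⊆ ι \ B`
is a polymatroid set function. -/
theorem jointDetection_negMarginal_polymatroid {ι : Type*} [DecidableEq ι] [Fintype ι]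
    (p : ι → ℝ) (hp : ∀ i, 0 ≤ p i ∧ p i ≤ 1) (B : Finset ι) :
    (jointDetection p (∅ : Finset ι) + jointDetection p B - jointDetection p (∅ ∪ B) = 0) ∧
    (∀ A₁ A₂ : Finset ι, A₁ ⊆ A₂ → A₂ ⊆ Bᶜ →
      jointDetection p A₁ + jointDetection p B - jointDetection p (A₁ ∪ B) ≤
        jointDetection p A₂ + jointDetection p B - jointDetection p (A₂ ∪ B)) ∧
    (∀ A₁ A₂ : Finset ι, A₁ ⊆ Bᶜ → A₂ ⊆ Bᶜ →
      (jointDetection p (A₁ ∪ A₂) + jointDetection p B - jointDetection p ((A₁ ∪ A₂) ∪ B)) +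
        (jointDetection p (A₁ ∩ A₂) + jointDetection p B - jointDetection p ((A₁ ∩ A₂) ∪ B)) ≤
      (jointDetection p A₁ + jointDetection p B - jointDetection p (A₁ ∪ B)) +
        (jointDetection p A₂ + jointDetection p B - jointDetection p (A₂ ∪ B))) := by
  have hdisj : ∀ {A : Finset ι}, A ⊆ Bᶜ → Disjoint A B := fun {A} h =>
    Finset.disjoint_left.2 fun a ha hb => by
      have := h ha; simp [Finset.mem_compl] at this; exact this hb
  have hB1 : 0 ≤ 1 - ∏ i ∈ B, (1 - p i) := by linarith [q_le_one p hp B]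
  refine ⟨?_, ?_, ?_⟩
  · rw [G_eq p hp (Finset.disjoint_left.2 (by simp))]; simp
  · intro A₁ A₂ h12 h2
    rw [G_eq p hp (hdisj (h12.trans h2)), G_eq p hp (hdisj h2)]
    apply mul_le_mul_of_nonneg_left _ hB1
    linarith [q_anti p hp h12]
  · intro A₁ A₂ h1 h2
    rw [G_eq p hp (hdisj h1), G_eq p hp (hdisj h2),
      G_eq p hp (hdisj (Finset.union_subset h1 h2)),
      G_eq p hp (hdisj ((Finset.inter_subset_left).trans h1))]
    have key : ∏ i ∈ A₁, (1 - p i) + ∏ i ∈ A₂, (1 - p i) ≤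
        ∏ i ∈ A₁ ∪ A₂, (1 - p i) + ∏ i ∈ A₁ ∩ A₂, (1 - p i) := by
      have e1 : A₁ = (A₁ \ A₂) ∪ (A₁ ∩ A₂) := by
        rw [Finset.sdiff_union_inter]
      have e2 : A₂ = (A₂ \ A₁) ∪ (A₁ ∩ A₂) := by
        rw [Finset.inter_comm, Finset.sdiff_union_inter]
      have e3 : A₁ ∪ A₂ = (A₁ \ A₂) ∪ ((A₂ \ A₁) ∪ (A₁ ∩ A₂)) := by
        rw [← e2]; rw [Finset.sdiff_union_self_eq_union]
      have d1 : Disjoint (A₁ \ A₂) (A₁ ∩ A₂) :=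
        Finset.disjoint_left.2 fun a ha hb => (Finset.mem_sdiff.1 ha).2 (Finset.mem_inter.1 hb).2
      have d2 : Disjoint (A₂ \ A₁) (A₁ ∩ A₂) :=
        Finset.disjoint_left.2 fun a ha hb => (Finset.mem_sdiff.1 ha).2 (Finset.mem_inter.1 hb).1
      have d3 : Disjoint (A₁ \ A₂) ((A₂ \ A₁) ∪ (A₁ ∩ A₂)) := by
        rw [← e2]
        exact Finset.disjoint_left.2 fun a ha hb =>
          (Finset.mem_sdiff.1 ha).2 hb
      set a := ∏ i ∈ A₁ \ A₂, (1 - p i)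
      set b := ∏ i ∈ A₂ \ A₁, (1 - p i)
      set c := ∏ i ∈ A₁ ∩ A₂, (1 - p i)
      have hA1 : ∏ i ∈ A₁, (1 - p i) = a * c := by rw [e1, Finset.prod_union d1]
      have hA2 : ∏ i ∈ A₂, (1 - p i) = b * c := by rw [e2, Finset.prod_union d2]
      have hU : ∏ i ∈ A₁ ∪ A₂, (1 - p i) = a * (b * c) := by
        rw [e3, Finset.prod_union d3, Finset.prod_union d2]
      rw [hA1, hA2, hU]
      have ha1 : a ≤ 1 := q_le_one p hp _
      have hb1 : b ≤ 1 := q_le_one p hp _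
      have hc0 : 0 ≤ c := q_nonneg p hp _
      nlinarith [mul_nonneg (mul_nonneg (sub_nonneg.2 ha1) (sub_nonneg.2 hb1)) hc0]
    nlinarith [hB1]
end

section
/- Let B, C, A be finite subsets of ι with C ⊆ A and A ∩ B = ∅. Then the difference of marginal joint detection gains satisfies [P_J(B ∪ C) − P_J(C)] − [P_J(B ∪ A) − P_J(A)] = (1 − ∏_{i∈B}(1 − p(i))) · (1 − ∏_{i∈A\C}(1 − p(i))) · ∏_{i∈C}(1 − p(i)). -/
/-- for finite `B, C, A ⊆ ι` with `C ⊆ A` and `A ∩ B = ∅`: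
`[P_J(B∪C) − P_J(C)] − [P_J(B∪A) − P_J(A)]
  = (1 − ∏_{i∈B}(1−p i))(1 − ∏_{i∈A\C}(1−p i))∏_{i∈C}(1−p i)`. -/
theorem jointDetection_marginal_diff {ι : Type*} [DecidableEq ι] [Fintype ι]
    (p : ι → ℝ) (hp : ∀ i, 0 ≤ p i ∧ p i ≤ 1)
    (B C A : Finset ι) (hCA : C ⊆ A) (hAB : A ∩ B = ∅) :
    (jointDetection p (B ∪ C) - jointDetection p C) -
      (jointDetection p (B ∪ A) - jointDetection p A) =
    (1 - ∏ i ∈ B, (1 - p i)) * (1 - ∏ i ∈ A \ C, (1 - p i)) * ∏ i ∈ C, (1 - p i) := by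
  have hAB' : Disjoint A B := Finset.disjoint_iff_inter_eq_empty.mpr hAB
  have hBC : Disjoint B C := (hAB'.symm.mono_right hCA)
  have hBA : Disjoint B A := hAB'.symm
  have h1 : ∏ i ∈ B ∪ C, (1 - p i) = (∏ i ∈ B, (1 - p i)) * ∏ i ∈ C, (1 - p i) :=
    Finset.prod_union hBC
  have h2 : ∏ i ∈ B ∪ A, (1 - p i) = (∏ i ∈ B, (1 - p i)) * ∏ i ∈ A, (1 - p i) :=
    Finset.prod_union hBA
  have h3 : ∏ i ∈ A, (1 - p i) = (∏ i ∈ A \ C, (1 - p i)) * ∏ i ∈ C, (1 - p i) := by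
    rw [← Finset.prod_union (Finset.sdiff_disjoint), Finset.sdiff_union_of_subset hCA]
  simp only [jointDetection, h1, h2, h3]
  ring
end

section
/- Assume θ = 1 (pure joint detection), and suppose ε ∈ [0,1] is such that for all distinct y, y' ∈ ι and all x ∈ Ω, p(y,x) ≠ 0 implies p(y',x) ≥ ε. Then for every finite S ⊆ ι and all distinct y_i, y_j ∈ ι \ S, the coverage function satisfies H(S ∪ {y_j} ∪ {y_i}) − H(S ∪ {y_j}) ≤ (1 − ε) · (H(S ∪ {y_i}) − H(S)). In particular, the elemental curvature α_e = max over such (S, y_i, y_j) with H(S ∪ {y_i}) − H(S) > 0 of the ratio (H(S ∪ {y_j} ∪ {y_i}) − H(S ∪ {y_j})) / (H(S ∪ {y_i}) − H(S)) satisfies α_e ≤ 1 − ε. -/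
open MeasureTheory

/-- The set coverage function with pure joint detection (`θ = 1`):
`H(S) = ∫ R(x)·(1 − ∏_{i∈S}(1 − p i x)) dμ(x)`. -/
noncomputable def jointCoverage {ι Ω : Type*} [MeasurableSpace Ω] (μ : Measure Ω)
    (R : Ω → ℝ) (p : ι → Ω → ℝ) (S : Finset ι) : ℝ :=
  ∫ x, R x * (1 - ∏ i ∈ S, (1 - p i x)) ∂μ

lemma jointCoverage_integrable {ι Ω : Type*} [MeasurableSpace Ω] (μ : Measure Ω)
    (R : Ω → ℝ) (p : ι → Ω → ℝ)
    (hmeas : ∀ i, Measurable (p i))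
    (hp : ∀ i x, 0 ≤ p i x ∧ p i x ≤ 1)
    (hR : ∀ x, 0 ≤ R x) (hRint : Integrable R μ) (S : Finset ι) :
    Integrable (fun x => R x * (1 - ∏ i ∈ S, (1 - p i x))) μ := by
  have hm : Measurable (fun x => 1 - ∏ i ∈ S, (1 - p i x)) := by
    apply Measurable.sub measurable_const
    exact Finset.measurable_prod S (fun i _ => measurable_const.sub (hmeas i))
  refine Integrable.mono hRint (hRint.1.mul hm.aestronglyMeasurable) ?_
  filter_upwards with x
  have h0 : 0 ≤ ∏ i ∈ S, (1 - p i x) :=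
    Finset.prod_nonneg fun i _ => by linarith [(hp i x).2]
  have h1 : ∏ i ∈ S, (1 - p i x) ≤ 1 :=
    Finset.prod_le_one (fun i _ => by linarith [(hp i x).2]) (fun i _ => by linarith [(hp i x).1])
  rw [Real.norm_eq_abs, Real.norm_eq_abs, abs_of_nonneg (hR x),
    abs_of_nonneg (mul_nonneg (hR x) (by linarith))]
  nlinarith [hR x]

/-- with `θ = 1`, if `ε ∈ [0,1]` is such that `p(y,x) ≠ 0` implies
`p(y',x) ≥ ε` for distinct `y, y'`, then
`H(S∪{y_j}∪{y_i}) − H(S∪{y_j}) ≤ (1−ε)(H(S∪{y_i}) − H(S))`; in particular the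
elemental-curvature ratio is at most `1 − ε` whenever its denominator is positive. -/
theorem jointCoverage_elemental_curvature_bound {ι Ω : Type*} [DecidableEq ι] [Fintype ι]
    [MeasurableSpace Ω] (μ : Measure Ω) (R : Ω → ℝ) (p : ι → Ω → ℝ)
    (hmeas : ∀ i, Measurable (p i))
    (hp : ∀ i x, 0 ≤ p i x ∧ p i x ≤ 1)
    (hR : ∀ x, 0 ≤ R x) (hRint : Integrable R μ)
    (ε : ℝ) (hε : 0 ≤ ε ∧ ε ≤ 1)
    (hsep : ∀ y y' : ι, y ≠ y' → ∀ x : Ω, p y x ≠ 0 → ε ≤ p y' x) :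
    (∀ (S : Finset ι) (yi yj : ι), yi ∉ S → yj ∉ S → yi ≠ yj →
      jointCoverage μ R p (insert yi (insert yj S)) - jointCoverage μ R p (insert yj S) ≤
        (1 - ε) * (jointCoverage μ R p (insert yi S) - jointCoverage μ R p S)) ∧
    (∀ (S : Finset ι) (yi yj : ι), yi ∉ S → yj ∉ S → yi ≠ yj →
      0 < jointCoverage μ R p (insert yi S) - jointCoverage μ R p S →
      (jointCoverage μ R p (insert yi (insert yj S)) - jointCoverage μ R p (insert yj S)) /
        (jointCoverage μ R p (insert yi S) - jointCoverage μ R p S) ≤ 1 - ε) := by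
  have key : ∀ (S : Finset ι) (yi yj : ι), yi ∉ S → yj ∉ S → yi ≠ yj →
      jointCoverage μ R p (insert yi (insert yj S)) - jointCoverage μ R p (insert yj S) ≤
        (1 - ε) * (jointCoverage μ R p (insert yi S) - jointCoverage μ R p S) := by
    intro S yi yj hi hj hne
    have int : ∀ T : Finset ι,
        Integrable (fun x => R x * (1 - ∏ i ∈ T, (1 - p i x))) μ :=
      jointCoverage_integrable μ R p hmeas hp hR hRint
    unfold jointCoverage
    rw [← integral_sub (int _) (int _), ← integral_sub (int _) (int _),
      ← integral_const_mul]
    refine integral_mono ((int _).sub (int _)) (((int _).sub (int _)).const_mul _) ?_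
    intro x
    simp only [Pi.sub_apply]
    have hQ0 : 0 ≤ ∏ i ∈ S, (1 - p i x) :=
      Finset.prod_nonneg fun i _ => by linarith [(hp i x).2]
    have hij : yi ∉ insert yj S := by
      simp [Finset.mem_insert, hne, hi]
    rw [Finset.prod_insert hij, Finset.prod_insert hj, Finset.prod_insert hi]
    set a := p yi x
    set b := p yj x
    set Q := ∏ i ∈ S, (1 - p i x)
    by_cases ha : a = 0
    · simp [ha]
    · have hb : ε ≤ b := hsep yi yj hne x ha
      have ha0 : 0 ≤ a := (hp yi x).1
      have hRaQ : 0 ≤ R x * (a * Q) := mul_nonneg (hR x) (mul_nonneg ha0 hQ0)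
      have := mul_le_mul_of_nonneg_right (by linarith : (1:ℝ) - b ≤ 1 - ε) hRaQ
      nlinarith [this]
  refine ⟨key, ?_⟩
  intro S yi yj hi hj hne hpos
  rw [div_le_iff₀ hpos]
  exact key S yi yj hi hj hne
end

section
/- Let X ⊆ ι be a finite ground set with |X| ≥ N for an integer N ≥ 2, and set β_f := 1 − (1 − 1/(N−1))^{N−1}. Fix y ∈ X with H({y}) > 0 and define G_y(A) := H(A) + H({y}) − H(A ∪ {y}) for A ⊆ X \ {y}. Let A⁰ := ∅ and, for k = 1, …, N−1, let A^k := A^{k−1} ∪ {a_k} where a_k ∈ (X \ {y}) \ A^{k−1} satisfies G_y(A^{k−1} ∪ {a_k}) ≥ G_y(A^{k−1} ∪ {b}) for every b ∈ (X \ {y}) \ A^{k−1} (a greedy chain for G_y), and set A^G_y := A^{N−1}. Then for every A ⊆ X \ {y} with |A| ≤ N − 1: 1 − (H(A ∪ {y}) − H(A)) / H({y}) ≤ (1/β_f) · (1 − (H(A^G_y ∪ {y}) − H(A^G_y)) / H({y})). Consequently, the partial curvature α_p := max over y ∈ X and sets S with y ∈ S ⊆ X, |S| ≤ N, of [1 −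 (H(S) − H(S \ {y})) / H({y})] satisfies α_p ≤ (1/β_f) · max_{y ∈ X} (1 − (H(A^G_y ∪ {y}) − H(A^G_y)) / H({y})). -/
open MeasureTheory

/-- The max detection set function: `P_M(S) = max_{i ∈ S} p i`, with `P_M(∅) = 0`. -/
noncomputable def maxDetection {ι : Type*} (p : ι → ℝ) (S : Finset ι) : ℝ :=
  if h : S.Nonempty then S.sup' h p else 0

/-- The detection function `P(x,S) = θ(1 - ∏_{i∈S}(1 - p i x)) + (1-θ) max_{i∈S} p i x`. -/
noncomputable def detection {ι Ω : Type*} (θ : ℝ) (p : ι → Ω → ℝ) (x : Ω) (S : Finset ι) : ℝ :=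
  θ * (1 - ∏ i ∈ S, (1 - p i x)) + (1 - θ) * maxDetection (fun i => p i x) S

/-- The set coverage function `H(S) = ∫ R(x) P(x,S) dμ(x)`. -/
noncomputable def setCoverage {ι Ω : Type*} [MeasurableSpace Ω] (μ : Measure Ω)
    (R : Ω → ℝ) (θ : ℝ) (p : ι → Ω → ℝ) (S : Finset ι) : ℝ :=
  ∫ x, R x * detection θ p x S ∂μ

/-- The affine negated marginal coverage `G_y(A) = H(A) + H({y}) − H(A ∪ {y})`. -/
noncomputable def negMarginal {ι Ω : Type*} [DecidableEq ι] [MeasurableSpace Ω]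
    (μ : Measure Ω) (R : Ω → ℝ) (θ : ℝ) (p : ι → Ω → ℝ) (y : ι) (A : Finset ι) : ℝ :=
  setCoverage μ R θ p A + setCoverage μ R θ p {y} - setCoverage μ R θ p (A ∪ {y})

set_option linter.unusedSectionVars false

section pointwise
variable {ι : Type*} [DecidableEq ι] (p : ι → ℝ)

lemma maxD_nonneg (h0 : ∀ i, 0 ≤ p i) (S : Finset ι) : 0 ≤ maxDetection p S := by
  unfold maxDetection
  split_ifs with h
  · obtain ⟨i, hi⟩ := h
    exact le_trans (h0 i) (Finset.le_sup' p hi)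
  · exact le_refl _

lemma maxD_le_one (h1 : ∀ i, p i ≤ 1) (S : Finset ι) : maxDetection p S ≤ 1 := by
  unfold maxDetection
  split_ifs with h
  · exact Finset.sup'_le h p fun i _ => h1 i
  · norm_num

lemma maxD_insert (h0 : ∀ i, 0 ≤ p i) (a : ι) (S : Finset ι) :
    maxDetection p (insert a S) = max (p a) (maxDetection p S) := by
  unfold maxDetection
  rcases S.eq_empty_or_nonempty with rfl | hS
  · simp [max_eq_left (h0 a)]
  · rw [dif_pos hS, dif_pos (Finset.insert_nonempty a S), Finset.sup'_insert hS]

lemma maxD_mono (h0 : ∀ i, 0 ≤ p i) {S T : Finset ι} (hST : S ⊆ T) :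
    maxDetection p S ≤ maxDetection p T := by
  unfold maxDetection
  split_ifs with h h2
  · exact Finset.sup'_le h p fun i hi => Finset.le_sup' p (hST hi)
  · exact absurd (h.mono hST) h2
  · rename_i h2
    obtain ⟨i, hi⟩ := h2
    exact le_trans (h0 i) (Finset.le_sup' p hi)
  · exact le_refl _

lemma minmax_aux (u' u v c : ℝ) (h : u' ≤ u) :
    min (max v u) c - min u c ≤ min (max v u') c - min u' c := by
  simp only [min_def, max_def]; split_ifs <;> linarith

end pointwise

section psi
variable {ι : Type*} [DecidableEq ι]

noncomputable def psiFn (θ : ℝ) (p : ι → ℝ) (y : ι) (A : Finset ι) : ℝ :=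
  θ * p y * (1 - ∏ i ∈ A, (1 - p i)) + (1 - θ) * min (maxDetection p A) (p y)

noncomputable def detP {ι : Type*} (θ : ℝ) (p : ι → ℝ) (S : Finset ι) : ℝ :=
  θ * (1 - ∏ i ∈ S, (1 - p i)) + (1 - θ) * maxDetection p S

lemma prod_one_sub_nonneg (p : ι → ℝ) (hp : ∀ i, 0 ≤ p i ∧ p i ≤ 1) (S : Finset ι) :
    0 ≤ ∏ i ∈ S, (1 - p i) :=
  Finset.prod_nonneg fun i _ => by linarith [(hp i).2]

lemma prod_one_sub_le_one (p : ι → ℝ) (hp : ∀ i, 0 ≤ p i ∧ p i ≤ 1) (S : Finset ι) :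
    ∏ i ∈ S, (1 - p i) ≤ 1 :=
  Finset.prod_le_one (fun i _ => by linarith [(hp i).2]) (fun i _ => by linarith [(hp i).1])

lemma prod_one_sub_anti (p : ι → ℝ) (hp : ∀ i, 0 ≤ p i ∧ p i ≤ 1) {S T : Finset ι}
    (hST : S ⊆ T) : ∏ i ∈ T, (1 - p i) ≤ ∏ i ∈ S, (1 - p i) := by
  rw [← Finset.prod_sdiff hST]
  have h2 : ∏ i ∈ T \ S, (1 - p i) ≤ 1 := prod_one_sub_le_one p hp _
  have h4 : 0 ≤ ∏ i ∈ T \ S, (1 - p i) := prod_one_sub_nonneg p hp _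
  nlinarith [prod_one_sub_nonneg p hp S]

lemma psiFn_nonneg (θ : ℝ) (hθ : 0 ≤ θ ∧ θ ≤ 1) (p : ι → ℝ) (hp : ∀ i, 0 ≤ p i ∧ p i ≤ 1)
    (y : ι) (A : Finset ι) : 0 ≤ psiFn θ p y A := by
  unfold psiFn
  have h1 := prod_one_sub_le_one p hp A
  have h2 := maxD_nonneg p (fun i => (hp i).1) A
  have h3 := (hp y).1
  have h5 : (0:ℝ) ≤ min (maxDetection p A) (p y) := le_min h2 h3
  have h6 : (0:ℝ) ≤ θ * p y * (1 - ∏ i ∈ A, (1 - p i)) :=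
    mul_nonneg (mul_nonneg hθ.1 h3) (by linarith)
  have h7 : (0:ℝ) ≤ (1 - θ) * min (maxDetection p A) (p y) :=
    mul_nonneg (by linarith [hθ.2]) h5
  linarith

lemma psiFn_le_one (θ : ℝ) (hθ : 0 ≤ θ ∧ θ ≤ 1) (p : ι → ℝ) (hp : ∀ i, 0 ≤ p i ∧ p i ≤ 1)
    (y : ι) (A : Finset ι) : psiFn θ p y A ≤ 1 := by
  unfold psiFn
  have h1 := prod_one_sub_nonneg p hp A
  have h2 := maxD_le_one p (fun i => (hp i).2) A
  have h3 := (hp y).2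
  have h4 := (hp y).1
  have h5 : min (maxDetection p A) (p y) ≤ 1 := le_trans (min_le_right _ _) h3
  have h55 : p y * (1 - ∏ i ∈ A, (1 - p i)) ≤ 1 := by nlinarith
  have h6 : θ * p y * (1 - ∏ i ∈ A, (1 - p i)) ≤ θ * 1 := by
    rw [mul_assoc]; exact mul_le_mul_of_nonneg_left h55 hθ.1
  have h7 : (1 - θ) * min (maxDetection p A) (p y) ≤ (1 - θ) * 1 :=
    mul_le_mul_of_nonneg_left h5 (by linarith [hθ.2])
  linarith

lemma detP_nonneg (θ : ℝ) (hθ : 0 ≤ θ ∧ θ ≤ 1) (p : ι → ℝ) (hp : ∀ i, 0 ≤ p i ∧ p i ≤ 1)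
    (S : Finset ι) : 0 ≤ detP θ p S := by
  unfold detP
  have h1 := prod_one_sub_le_one p hp S
  have h2 := maxD_nonneg p (fun i => (hp i).1) S
  nlinarith [hθ.1, hθ.2]

lemma detP_le_one (θ : ℝ) (hθ : 0 ≤ θ ∧ θ ≤ 1) (p : ι → ℝ) (hp : ∀ i, 0 ≤ p i ∧ p i ≤ 1)
    (S : Finset ι) : detP θ p S ≤ 1 := by
  unfold detP
  have h1 := prod_one_sub_nonneg p hp S
  have h2 := maxD_le_one p (fun i => (hp i).2) S
  nlinarith [hθ.1, hθ.2]

/-- key marginal identity -/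
lemma detP_marginal (θ : ℝ) (p : ι → ℝ) (hp : ∀ i, 0 ≤ p i ∧ p i ≤ 1) (y : ι) (A : Finset ι)
    (hy : y ∉ A) :
    detP θ p A + detP θ p {y} - detP θ p (insert y A) = psiFn θ p y A := by
  unfold detP psiFn
  rw [Finset.prod_insert hy, Finset.prod_singleton, maxD_insert p (fun i => (hp i).1)]
  have hsing : maxDetection p {y} = p y := by
    unfold maxDetection
    rw [dif_pos (Finset.singleton_nonempty y), Finset.sup'_singleton]
  rw [hsing]
  have : p y + maxDetection p A - max (p y) (maxDetection p A) = min (maxDetection p A) (p y) := by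
    rcases le_total (p y) (maxDetection p A) with h | h
    · rw [max_eq_right h, min_eq_right h]; ring
    · rw [max_eq_left h, min_eq_left h]; ring
  linear_combination (1 - θ) * this

lemma psiFn_mono (θ : ℝ) (hθ : 0 ≤ θ ∧ θ ≤ 1) (p : ι → ℝ) (hp : ∀ i, 0 ≤ p i ∧ p i ≤ 1)
    (y : ι) {A B : Finset ι} (hAB : A ⊆ B) : psiFn θ p y A ≤ psiFn θ p y B := by
  unfold psiFn
  have h1 : ∏ i ∈ B, (1 - p i) ≤ ∏ i ∈ A, (1 - p i) := prod_one_sub_anti p hp hAB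
  have h2 : maxDetection p A ≤ maxDetection p B := maxD_mono p (fun i => (hp i).1) hAB
  have h3 : min (maxDetection p A) (p y) ≤ min (maxDetection p B) (p y) :=
    min_le_min h2 le_rfl
  have h4 : θ * p y * (1 - ∏ i ∈ A, (1 - p i)) ≤ θ * p y * (1 - ∏ i ∈ B, (1 - p i)) :=
    mul_le_mul_of_nonneg_left (by linarith) (mul_nonneg hθ.1 (hp y).1)
  have h5 : (1 - θ) * min (maxDetection p A) (p y) ≤ (1 - θ) * min (maxDetection p B) (p y) :=
    mul_le_mul_of_nonneg_left h3 (by linarith [hθ.2])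
  linarith

lemma psiFn_submod (θ : ℝ) (hθ : 0 ≤ θ ∧ θ ≤ 1) (p : ι → ℝ) (hp : ∀ i, 0 ≤ p i ∧ p i ≤ 1)
    (y b : ι) {A B : Finset ι} (hAB : A ⊆ B) (hbB : b ∉ B) :
    psiFn θ p y (insert b B) - psiFn θ p y B ≤ psiFn θ p y (insert b A) - psiFn θ p y A := by
  have hbA : b ∉ A := fun h => hbB (hAB h)
  unfold psiFn
  rw [Finset.prod_insert hbB, Finset.prod_insert hbA,
    maxD_insert p (fun i => (hp i).1), maxD_insert p (fun i => (hp i).1)]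
  have h1 : ∏ i ∈ B, (1 - p i) ≤ ∏ i ∈ A, (1 - p i) := prod_one_sub_anti p hp hAB
  have h2 : maxDetection p A ≤ maxDetection p B := maxD_mono p (fun i => (hp i).1) hAB
  have h3 := minmax_aux (maxDetection p A) (maxDetection p B) (p b) (p y) h2
  have h4 : (1 - θ) * (min (max (p b) (maxDetection p B)) (p y) - min (maxDetection p B) (p y))
      ≤ (1 - θ) * (min (max (p b) (maxDetection p A)) (p y) - min (maxDetection p A) (p y)) :=
    mul_le_mul_of_nonneg_left h3 (by linarith [hθ.2])
  have h5 : θ * p y * (p b * ∏ i ∈ B, (1 - p i)) ≤ θ * p y * (p b * ∏ i ∈ A, (1 - p i)) :=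
    mul_le_mul_of_nonneg_left (mul_le_mul_of_nonneg_left h1 (hp b).1)
      (mul_nonneg hθ.1 (hp y).1)
  nlinarith [h4, h5]

end psi

section integration
variable {ι Ω : Type*} [DecidableEq ι] [MeasurableSpace Ω]
  (μ : Measure Ω) (R : Ω → ℝ) (θ : ℝ) (p : ι → Ω → ℝ)

lemma maxD_measurable (hmeas : ∀ i, Measurable (p i)) (hp : ∀ i x, 0 ≤ p i x ∧ p i x ≤ 1)
    (S : Finset ι) : Measurable fun x => maxDetection (fun i => p i x) S := by
  induction S using Finset.induction with
  | empty => simp only [maxDetection, Finset.not_nonempty_empty, dif_neg, not_false_iff]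
             exact measurable_const
  | @insert a S ha ih =>
    have heq : ∀ x : Ω, maxDetection (fun i => p i x) (insert a S)
        = max (p a x) (maxDetection (fun i => p i x) S) :=
      fun x => maxD_insert (fun i => p i x) (fun i => (hp i x).1) a S
    simp only [heq]
    exact (hmeas a).max ih

lemma detP_measurable (hmeas : ∀ i, Measurable (p i)) (hp : ∀ i x, 0 ≤ p i x ∧ p i x ≤ 1)
    (S : Finset ι) : Measurable fun x => detP θ (fun i => p i x) S := by
  unfold detP
  have h1 : Measurable fun x => ∏ i ∈ S, (1 - p i x) :=
    Finset.measurable_prod S (fun i _ => (measurable_const.sub (hmeas i)))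
  exact ((measurable_const.mul (measurable_const.sub h1))).add
    (measurable_const.mul (maxD_measurable p hmeas hp S))

lemma integrable_RdetP (hθ : 0 ≤ θ ∧ θ ≤ 1) (hmeas : ∀ i, Measurable (p i))
    (hp : ∀ i x, 0 ≤ p i x ∧ p i x ≤ 1) (hR : ∀ x, 0 ≤ R x) (hRint : Integrable R μ)
    (S : Finset ι) : Integrable (fun x => R x * detP θ (fun i => p i x) S) μ := by
  apply Integrable.mono hRint
  · exact hRint.aestronglyMeasurable.mul
      (detP_measurable θ p hmeas hp S).aestronglyMeasurable
  · refine Filter.Eventually.of_forall fun x => ?_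
    have h0 := detP_nonneg θ hθ (fun i => p i x) (fun i => hp i x) S
    have h1 := detP_le_one θ hθ (fun i => p i x) (fun i => hp i x) S
    rw [Real.norm_eq_abs, Real.norm_eq_abs, abs_of_nonneg (mul_nonneg (hR x) h0),
      abs_of_nonneg (hR x)]
    nlinarith [hR x]

end integration

section negM
variable {ι Ω : Type*} [DecidableEq ι] [MeasurableSpace Ω]
  (μ : Measure Ω) (R : Ω → ℝ) (θ : ℝ) (p : ι → Ω → ℝ)
  (hθ : 0 ≤ θ ∧ θ ≤ 1) (hmeas : ∀ i, Measurable (p i))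
  (hp : ∀ i x, 0 ≤ p i x ∧ p i x ≤ 1)
  (hR : ∀ x, 0 ≤ R x) (hRint : Integrable R μ)

lemma detection_eq_detP (x : Ω) (S : Finset ι) :
    detection θ p x S = detP θ (fun i => p i x) S := rfl

include hθ hmeas hp hR hRint

lemma integrable_Rdet (S : Finset ι) :
    Integrable (fun x => R x * detection θ p x S) μ := by
  simp only [detection_eq_detP]
  exact integrable_RdetP μ R θ p hθ hmeas hp hR hRint S

omit hθ hmeas hp hR hRint

lemma setCoverage_empty : setCoverage μ R θ p (∅ : Finset ι) = 0 := by
  unfold setCoverage detection maxDetection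
  simp

include hθ hmeas hp hR hRint

lemma integrable_Rpsi (y : ι) (A : Finset ι) (hy : y ∉ A) :
    Integrable (fun x => R x * psiFn θ (fun i => p i x) y A) μ := by
  have heq : (fun x => R x * psiFn θ (fun i => p i x) y A)
      = fun x => (R x * detection θ p x A + R x * detection θ p x {y})
          - R x * detection θ p x (insert y A) := by
    funext x
    rw [detection_eq_detP, detection_eq_detP, detection_eq_detP,
      ← detP_marginal θ (fun i => p i x) (fun i => hp i x) y A hy]
    ring
  rw [heq]
  exact ((integrable_Rdet μ R θ p hθ hmeas hp hR hRint A).add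
    (integrable_Rdet μ R θ p hθ hmeas hp hR hRint {y})).sub
    (integrable_Rdet μ R θ p hθ hmeas hp hR hRint (insert y A))

lemma negMarginal_eq (y : ι) (A : Finset ι) (hy : y ∉ A) :
    negMarginal μ R θ p y A = ∫ x, R x * psiFn θ (fun i => p i x) y A ∂μ := by
  unfold negMarginal setCoverage
  rw [show A ∪ {y} = insert y A from by ext b; simp [or_comm]]
  have i1 := integrable_Rdet μ R θ p hθ hmeas hp hR hRint A
  have i2 := integrable_Rdet μ R θ p hθ hmeas hp hR hRint {y}
  have i3 := integrable_Rdet μ R θ p hθ hmeas hp hR hRint (insert y A)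
  have i12 : Integrable
      (fun x => R x * detection θ p x A + R x * detection θ p x {y}) μ := i1.add i2
  rw [← integral_add i1 i2, ← integral_sub i12 i3]
  congr 1
  funext x
  rw [detection_eq_detP, detection_eq_detP, detection_eq_detP,
    ← detP_marginal θ (fun i => p i x) (fun i => hp i x) y A hy]
  ring

omit hθ hmeas hp hR hRint

lemma negMarginal_empty (y : ι) : negMarginal μ R θ p y (∅ : Finset ι) = 0 := by
  unfold negMarginal
  rw [setCoverage_empty, Finset.empty_union]
  ring

include hθ hmeas hp hR hRint

lemma negMarginal_mono (y : ι) {A B : Finset ι} (hAB : A ⊆ B) (hyB : y ∉ B) :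
    negMarginal μ R θ p y A ≤ negMarginal μ R θ p y B := by
  have hyA : y ∉ A := fun h => hyB (hAB h)
  rw [negMarginal_eq μ R θ p hθ hmeas hp hR hRint y A hyA,
    negMarginal_eq μ R θ p hθ hmeas hp hR hRint y B hyB]
  refine integral_mono (integrable_Rpsi μ R θ p hθ hmeas hp hR hRint y A hyA)
    (integrable_Rpsi μ R θ p hθ hmeas hp hR hRint y B hyB) fun x => ?_
  exact mul_le_mul_of_nonneg_left
    (psiFn_mono θ hθ (fun i => p i x) (fun i => hp i x) y hAB) (hR x)

lemma negMarginal_submod (y b : ι) {A B : Finset ι} (hAB : A ⊆ B) (hyB : y ∉ B)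
    (hby : b ≠ y) (hbB : b ∉ B) :
    negMarginal μ R θ p y (insert b B) - negMarginal μ R θ p y B ≤
      negMarginal μ R θ p y (insert b A) - negMarginal μ R θ p y A := by
  have hyA : y ∉ A := fun h => hyB (hAB h)
  have hbA : b ∉ A := fun h => hbB (hAB h)
  have hyibB : y ∉ insert b B := by simp [hyB, Ne.symm hby]
  have hyibA : y ∉ insert b A := by simp [hyA, Ne.symm hby]
  rw [negMarginal_eq μ R θ p hθ hmeas hp hR hRint y _ hyibB,
    negMarginal_eq μ R θ p hθ hmeas hp hR hRint y B hyB,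
    negMarginal_eq μ R θ p hθ hmeas hp hR hRint y _ hyibA,
    negMarginal_eq μ R θ p hθ hmeas hp hR hRint y A hyA]
  have i1 := integrable_Rpsi μ R θ p hθ hmeas hp hR hRint y _ hyibB
  have i2 := integrable_Rpsi μ R θ p hθ hmeas hp hR hRint y B hyB
  have i3 := integrable_Rpsi μ R θ p hθ hmeas hp hR hRint y _ hyibA
  have i4 := integrable_Rpsi μ R θ p hθ hmeas hp hR hRint y A hyA
  have key : ∫ x, (R x * psiFn θ (fun i => p i x) y (insert b B)
      + R x * psiFn θ (fun i => p i x) y A) ∂μ ≤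
      ∫ x, (R x * psiFn θ (fun i => p i x) y B
      + R x * psiFn θ (fun i => p i x) y (insert b A)) ∂μ := by
    refine integral_mono (i1.add i4) (i2.add i3) fun x => ?_
    have hsub := psiFn_submod θ hθ (fun i => p i x) (fun i => hp i x) y b hAB hbB
    have h' := mul_le_mul_of_nonneg_left hsub (hR x)
    rw [mul_sub, mul_sub] at h'
    simp only
    linarith
  rw [integral_add i1 i4, integral_add i2 i3] at key
  linarith

end negM

section greedy
variable {ι : Type*} [DecidableEq ι]

lemma greedy_sum_bound (G : Finset ι → ℝ) (D : Finset ι)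
    (hsub : ∀ A B : Finset ι, ∀ b ∈ D, A ⊆ B → B ⊆ D → b ∉ B →
      G (insert b B) - G B ≤ G (insert b A) - G A) :
    ∀ S T : Finset ι, T ⊆ D → S ⊆ D → Disjoint S T →
      G (S ∪ T) - G T ≤ ∑ b ∈ S, (G (insert b T) - G T) := by
  intro S
  induction S using Finset.induction with
  | empty => intro T _ _ _; simp
  | @insert c S hc ih =>
    intro T hT hSD hdisj
    have hcD : c ∈ D := hSD (Finset.mem_insert_self c S)
    have hSD' : S ⊆ D := fun i hi => hSD (Finset.mem_insert_of_mem hi)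
    have hdisj' : Disjoint S T := hdisj.mono_left (Finset.subset_insert c S)
    have hcT : c ∉ T := Finset.disjoint_left.mp hdisj (Finset.mem_insert_self c S)
    have hcST : c ∉ S ∪ T := by simp [hc, hcT]
    have hST : S ∪ T ⊆ D := Finset.union_subset hSD' hT
    have h1 : G (insert c (S ∪ T)) - G (S ∪ T) ≤ G (insert c T) - G T :=
      hsub T (S ∪ T) c hcD Finset.subset_union_right hST hcST
    have h2 := ih T hT hSD' hdisj'
    rw [Finset.sum_insert hc]
    have : insert c S ∪ T = insert c (S ∪ T) := by ext b; simp [or_assoc]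
    rw [this]
    linarith

lemma greedy_bound (G : Finset ι → ℝ) (D : Finset ι) (K : ℕ) (hK : 1 ≤ K)
    (hG0 : G ∅ = 0)
    (hmono : ∀ A B : Finset ι, A ⊆ B → B ⊆ D → G A ≤ G B)
    (hsub : ∀ A B : Finset ι, ∀ b ∈ D, A ⊆ B → B ⊆ D → b ∉ B →
      G (insert b B) - G B ≤ G (insert b A) - G A)
    (Ach : ℕ → Finset ι) (h0 : Ach 0 = ∅)
    (hstep : ∀ k < K, ∃ a ∈ D \ Ach k, Ach (k + 1) = insert a (Ach k) ∧
      ∀ b ∈ D \ Ach k, G (insert b (Ach k)) ≤ G (insert a (Ach k)))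
    (A' : Finset ι) (hA'D : A' ⊆ D) (hcard : A'.card ≤ K) :
    (1 - (1 - 1 / (K : ℝ)) ^ K) * G A' ≤ G (Ach K) := by
  have hKpos : (0 : ℝ) < K := by exact_mod_cast hK
  have h1K : 1 / (K : ℝ) ≤ 1 := by
    rw [div_le_one hKpos]; exact_mod_cast hK
  have hc0 : (0:ℝ) ≤ 1 - 1 / (K : ℝ) := by linarith
  have hcK : (K : ℝ) * (1 - 1 / (K : ℝ)) = (K : ℝ) - 1 := by field_simp
  -- chain subsets
  have hsubset : ∀ k, k ≤ K → Ach k ⊆ D := by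
    intro k
    induction k with
    | zero => intro _; rw [h0]; exact Finset.empty_subset D
    | succ n ihn =>
      intro hn
      obtain ⟨a, haD, heq, -⟩ := hstep n (by omega)
      rw [heq]
      exact Finset.insert_subset (Finset.mem_sdiff.mp haD).1 (ihn (by omega))
  -- key per-step inequality
  have hkey : ∀ k < K, G A' ≤ G (Ach k) + K * (G (Ach (k + 1)) - G (Ach k)) := by
    intro k hk
    obtain ⟨a, haD, heq, hbest⟩ := hstep k hk
    have hAk : Ach k ⊆ D := hsubset k (le_of_lt hk)
    have hAk1 : Ach (k + 1) ⊆ D := hsubset (k + 1) hk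
    have hδ : 0 ≤ G (Ach (k + 1)) - G (Ach k) := by
      have := hmono (Ach k) (Ach (k + 1)) (by rw [heq]; exact Finset.subset_insert _ _) hAk1
      linarith
    have h1 : G A' ≤ G (A' ∪ Ach k) :=
      hmono A' (A' ∪ Ach k) Finset.subset_union_left (Finset.union_subset hA'D hAk)
    have h2 : G (A' ∪ Ach k) - G (Ach k) ≤
        ∑ b ∈ A' \ Ach k, (G (insert b (Ach k)) - G (Ach k)) := by
      have := greedy_sum_bound G D hsub (A' \ Ach k) (Ach k) hAk
        (fun i hi => hA'D (Finset.mem_sdiff.mp hi).1) (Finset.sdiff_disjoint)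
      rwa [Finset.sdiff_union_self_eq_union] at this
    have h3 : ∑ b ∈ A' \ Ach k, (G (insert b (Ach k)) - G (Ach k)) ≤
        (A' \ Ach k).card • (G (Ach (k + 1)) - G (Ach k)) := by
      refine Finset.sum_le_card_nsmul _ _ _ fun b hb => ?_
      have hb' : b ∈ D \ Ach k := by
        rw [Finset.mem_sdiff] at hb ⊢
        exact ⟨hA'D hb.1, hb.2⟩
      have := hbest b hb'
      rw [heq]
      linarith
    have h4 : ((A' \ Ach k).card : ℝ) ≤ (K : ℝ) := by
      have : (A' \ Ach k).card ≤ K := le_trans (Finset.card_le_card Finset.sdiff_subset) hcard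
      exact_mod_cast this
    have h5 : ((A' \ Ach k).card : ℝ) * (G (Ach (k + 1)) - G (Ach k)) ≤
        (K : ℝ) * (G (Ach (k + 1)) - G (Ach k)) := mul_le_mul_of_nonneg_right h4 hδ
    rw [nsmul_eq_mul] at h3
    linarith
  -- recursion
  have hrec : ∀ k, k ≤ K → G A' - G (Ach k) ≤ (1 - 1 / (K : ℝ)) ^ k * G A' := by
    intro k
    induction k with
    | zero => intro _; rw [h0, hG0, pow_zero]; linarith
    | succ n ihn =>
      intro hn
      have hn' : n < K := by omega
      have ih := ihn (by omega)
      have key := hkey n hn'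
      have e1 : (K : ℝ) * (G A' - G (Ach (n + 1))) ≤
          ((K : ℝ) * (1 - 1 / (K : ℝ))) * (G A' - G (Ach n)) := by
        rw [hcK]; linarith
      rw [mul_assoc] at e1
      have e2 : G A' - G (Ach (n + 1)) ≤ (1 - 1 / (K : ℝ)) * (G A' - G (Ach n)) :=
        (mul_le_mul_iff_of_pos_left hKpos).mp e1
      calc G A' - G (Ach (n + 1)) ≤ (1 - 1 / (K : ℝ)) * (G A' - G (Ach n)) := e2
        _ ≤ (1 - 1 / (K : ℝ)) * ((1 - 1 / (K : ℝ)) ^ n * G A') :=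
            mul_le_mul_of_nonneg_left ih hc0
        _ = (1 - 1 / (K : ℝ)) ^ (n + 1) * G A' := by ring
  have hfin := hrec K le_rfl
  linarith

end greedy


/-- a greedy chain of length `N−1` for `G_y` upper bounds the partial
curvature: for any `A ⊆ X \ {y}` with `|A| ≤ N−1`,
`1 − ΔH(y|A)/H({y}) ≤ (1/β_f)(1 − ΔH(y|A^G_y)/H({y}))` where
`β_f = 1 − (1 − 1/(N−1))^{N−1}`; consequently
`α_p ≤ (1/β_f)·max_{y∈X}(1 − ΔH(y|A^G_y)/H({y}))`. -/
theorem partialCurvature_greedy_bound {ι Ω : Type*} [DecidableEq ι] [Fintype ι]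
    [MeasurableSpace Ω] (μ : Measure Ω) (R : Ω → ℝ) (θ : ℝ) (p : ι → Ω → ℝ)
    (hθ : 0 ≤ θ ∧ θ ≤ 1)
    (hmeas : ∀ i, Measurable (p i))
    (hp : ∀ i x, 0 ≤ p i x ∧ p i x ≤ 1)
    (hR : ∀ x, 0 ≤ R x) (hRint : Integrable R μ)
    (X : Finset ι) (N : ℕ) (hN : 2 ≤ N) (hX : N ≤ X.card)
    (hHy : ∀ y ∈ X, 0 < setCoverage μ R θ p {y})
    (A : ι → ℕ → Finset ι) (hA0 : ∀ y, A y 0 = ∅)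
    (hchain : ∀ y ∈ X, ∀ k < N - 1, ∃ a ∈ (X \ {y}) \ A y k,
      A y (k + 1) = insert a (A y k) ∧
      ∀ b ∈ (X \ {y}) \ A y k,
        negMarginal μ R θ p y (insert b (A y k)) ≤
          negMarginal μ R θ p y (insert a (A y k))) :
    (∀ y ∈ X, ∀ A' ⊆ X \ {y}, A'.card ≤ N - 1 →
      1 - (setCoverage μ R θ p (A' ∪ {y}) - setCoverage μ R θ p A') /
            setCoverage μ R θ p {y} ≤
        (1 / (1 - (1 - 1 / ((N : ℝ) - 1)) ^ (N - 1))) *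
          (1 - (setCoverage μ R θ p (A y (N - 1) ∪ {y}) -
                  setCoverage μ R θ p (A y (N - 1))) / setCoverage μ R θ p {y})) ∧
    (∀ y ∈ X, ∀ S : Finset ι, y ∈ S → S ⊆ X → S.card ≤ N →
      1 - (setCoverage μ R θ p S - setCoverage μ R θ p (S \ {y})) /
            setCoverage μ R θ p {y} ≤
        (1 / (1 - (1 - 1 / ((N : ℝ) - 1)) ^ (N - 1))) *
          (X.sup' (Finset.card_pos.mp (by omega)) fun y' =>
            1 - (setCoverage μ R θ p (A y' (N - 1) ∪ {y'}) -
                  setCoverage μ R θ p (A y' (N - 1))) / setCoverage μ R θ p {y'})) := by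
  -- positivity of β
  have hN1 : (1 : ℝ) ≤ (N : ℝ) - 1 := by
    have : (2 : ℝ) ≤ (N : ℝ) := by exact_mod_cast hN
    linarith
  have hβpos : 0 < 1 - (1 - 1 / ((N : ℝ) - 1)) ^ (N - 1) := by
    have hb0 : 0 ≤ 1 - 1 / ((N : ℝ) - 1) := by
      have : 1 / ((N : ℝ) - 1) ≤ 1 := by
        rw [div_le_one (by linarith)]; linarith
      linarith
    have hb1 : 1 - 1 / ((N : ℝ) - 1) < 1 := by
      have : 0 < 1 / ((N : ℝ) - 1) := by positivity
      linarith
    have := pow_lt_one₀ hb0 hb1 (by omega : N - 1 ≠ 0)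
    linarith
  have hcast : ((N - 1 : ℕ) : ℝ) = (N : ℝ) - 1 := by
    have h1 : (1 : ℕ) ≤ N := by omega
    push_cast [h1]
    ring
  have part1 : ∀ y ∈ X, ∀ A' ⊆ X \ {y}, A'.card ≤ N - 1 →
      1 - (setCoverage μ R θ p (A' ∪ {y}) - setCoverage μ R θ p A') /
            setCoverage μ R θ p {y} ≤
        (1 / (1 - (1 - 1 / ((N : ℝ) - 1)) ^ (N - 1))) *
          (1 - (setCoverage μ R θ p (A y (N - 1) ∪ {y}) -
                  setCoverage μ R θ p (A y (N - 1))) / setCoverage μ R θ p {y}) := by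
    intro y hy A' hA' hcard
    have hHy' := hHy y hy
    have hHyne : setCoverage μ R θ p {y} ≠ 0 := ne_of_gt hHy'
    have hmono' : ∀ B C : Finset ι, B ⊆ C → C ⊆ X \ {y} →
        negMarginal μ R θ p y B ≤ negMarginal μ R θ p y C := by
      intro B C hBC hCD
      have hyC : y ∉ C := fun h => (Finset.mem_sdiff.mp (hCD h)).2 (Finset.mem_singleton_self y)
      exact negMarginal_mono μ R θ p hθ hmeas hp hR hRint y hBC hyC
    have hsub' : ∀ B C : Finset ι, ∀ b ∈ X \ {y}, B ⊆ C → C ⊆ X \ {y} → b ∉ C →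
        negMarginal μ R θ p y (insert b C) - negMarginal μ R θ p y C ≤
          negMarginal μ R θ p y (insert b B) - negMarginal μ R θ p y B := by
      intro B C b hb hBC hCD hbC
      have hyC : y ∉ C := fun h => (Finset.mem_sdiff.mp (hCD h)).2 (Finset.mem_singleton_self y)
      have hby : b ≠ y := by
        have := (Finset.mem_sdiff.mp hb).2
        simpa [Finset.mem_singleton] using this
      exact negMarginal_submod μ R θ p hθ hmeas hp hR hRint y b hBC hyC hby hbC
    have hgreedy := greedy_bound (negMarginal μ R θ p y) (X \ {y}) (N - 1) (by omega)
      (negMarginal_empty μ R θ p y) hmono' hsub' (A y) (hA0 y) (hchain y hy) A' hA' hcard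
    rw [hcast] at hgreedy
    have heq : ∀ B : Finset ι,
        1 - (setCoverage μ R θ p (B ∪ {y}) - setCoverage μ R θ p B) /
          setCoverage μ R θ p {y} = negMarginal μ R θ p y B / setCoverage μ R θ p {y} := by
      intro B
      unfold negMarginal
      field_simp
      ring
    rw [heq A', heq (A y (N - 1))]
    have h2 : negMarginal μ R θ p y A' ≤
        (1 / (1 - (1 - 1 / ((N : ℝ) - 1)) ^ (N - 1))) *
          negMarginal μ R θ p y (A y (N - 1)) := by
      rw [show (1 / (1 - (1 - 1 / ((N : ℝ) - 1)) ^ (N - 1))) *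
            negMarginal μ R θ p y (A y (N - 1)) =
          negMarginal μ R θ p y (A y (N - 1)) /
            (1 - (1 - 1 / ((N : ℝ) - 1)) ^ (N - 1)) from by ring,
        le_div_iff₀ hβpos, mul_comm]
      exact hgreedy
    rw [show (1 / (1 - (1 - 1 / ((N : ℝ) - 1)) ^ (N - 1))) *
          (negMarginal μ R θ p y (A y (N - 1)) / setCoverage μ R θ p {y}) =
        ((1 / (1 - (1 - 1 / ((N : ℝ) - 1)) ^ (N - 1))) *
          negMarginal μ R θ p y (A y (N - 1))) / setCoverage μ R θ p {y} from by ring]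
    exact (div_le_div_iff_of_pos_right hHy').mpr h2
  refine ⟨part1, ?_⟩
  intro y hy S hyS hSX hScard
  have hA'sub : S \ {y} ⊆ X \ {y} := Finset.sdiff_subset_sdiff hSX (Finset.Subset.refl _)
  have hysub : {y} ⊆ S := Finset.singleton_subset_iff.mpr hyS
  have hcard' : (S \ {y}).card ≤ N - 1 := by
    rw [Finset.card_sdiff_of_subset hysub, Finset.card_singleton]
    omega
  have hunion : (S \ {y}) ∪ {y} = S := by
    ext b
    simp only [Finset.mem_union, Finset.mem_sdiff, Finset.mem_singleton]
    constructor
    · rintro (⟨h1, _⟩ | rfl)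
      · exact h1
      · exact hyS
    · intro hb
      by_cases hby : b = y
      · exact Or.inr hby
      · exact Or.inl ⟨hb, hby⟩
  have h1 := part1 y hy (S \ {y}) hA'sub hcard'
  rw [hunion] at h1
  refine h1.trans ?_
  refine mul_le_mul_of_nonneg_left ?_ (by positivity)
  exact Finset.le_sup' (f := fun y' =>
    1 - (setCoverage μ R θ p (A y' (N - 1) ∪ {y'}) -
      setCoverage μ R θ p (A y' (N - 1))) / setCoverage μ R θ p {y'}) hy
end

section
/- For every integer N ≥ 1, the function α ↦ (1/α)·(1 − (1 − α/N)^N) is antitone (monotonically nonincreasing) on the interval (0, 1]: if 0 < α₁ ≤ α₂ ≤ 1 then (1/α₂)·(1 − (1 − α₂/N)^N) ≤ (1/α₁)·(1 − (1 − α₁/N)^N). -/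
/-! Since `1 - x ^ N = (1 - x) * ∑ k < N, x ^ k` with `1 - x = α / N`, the bound is the mean
`(1 / N) * ∑ k < N, (1 - α / N) ^ k` of powers of a base in `[0, 1]` that decreases with `α`. -/

theorem one_div_mul_one_sub_pow_eq_mean_geom_sum (N : ℕ) {α : ℝ} (hα : α ≠ 0) :
    1 / α * (1 - (1 - α / N) ^ N) = 1 / N * ∑ k ∈ Finset.range N, (1 - α / N) ^ k := by
  rcases N.eq_zero_or_pos with rfl | hN
  · simp
  rw [← mul_neg_geom_sum, sub_sub_cancel]
  field_simp

theorem totalCurvatureBound_antitone_general (N : ℕ) (α₁ α₂ : ℝ)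
    (h₁ : 0 < α₁) (h₁₂ : α₁ ≤ α₂) (h₂ : α₂ ≤ 1) :
    (1 / α₂) * (1 - (1 - α₂ / N) ^ N) ≤ (1 / α₁) * (1 - (1 - α₁ / N) ^ N) := by
  rw [one_div_mul_one_sub_pow_eq_mean_geom_sum N (h₁.trans_le h₁₂).ne',
    one_div_mul_one_sub_pow_eq_mean_geom_sum N h₁.ne']
  gcongr with k hk
  have hN : (1 : ℝ) ≤ N := Nat.one_le_cast.mpr (Nat.one_le_of_lt (Finset.mem_range.mp hk))
  rw [sub_nonneg, div_le_one (by positivity)]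
  linarith

/-- for every integer `N ≥ 1`, the total-curvature performance bound
`α ↦ (1/α)(1 − (1 − α/N)^N)` is antitone on `(0, 1]`. -/
theorem totalCurvatureBound_antitone (N : ℕ) (hN : 1 ≤ N) (α₁ α₂ : ℝ)
    (h₁ : 0 < α₁) (h₁₂ : α₁ ≤ α₂) (h₂ : α₂ ≤ 1) :
    (1 / α₂) * (1 - (1 - α₂ / N) ^ N) ≤ (1 / α₁) * (1 - (1 - α₁ / N) ^ N) :=
  totalCurvatureBound_antitone_general N α₁ α₂ h₁ h₁₂ h₂
end

section
/- For every integer N ≥ 1, the function α ↦ 1 − ( (Σ_{k=1}^{N−1} α^k) / (Σ_{k=0}^{N−1} α^k) )^N is antitone (monotonically nonincreasing) on the interval [0, 1]: if 0 ≤ α₁ ≤ α₂ ≤ 1 then 1 − ((Σ_{k=1}^{N−1} α₂^k)/(Σ_{k=0}^{N−1} α₂^k))^N ≤ 1 − ((Σ_{k=1}^{N−1} α₁^k)/(Σ_{k=0}^{N−1} α₁^k))^N. -/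
/-- for every integer `N ≥ 1`, the elemental-curvature performance bound
`α ↦ 1 − ((Σ_{k=1}^{N−1} α^k)/(Σ_{k=0}^{N−1} α^k))^N` is antitone on `[0, 1]`. -/
theorem elementalCurvatureBound_antitone (N : ℕ) (hN : 1 ≤ N) (α₁ α₂ : ℝ)
    (h₁ : 0 ≤ α₁) (h₁₂ : α₁ ≤ α₂) (h₂ : α₂ ≤ 1) :
    1 - ((∑ k ∈ Finset.Ico 1 N, α₂ ^ k) / (∑ k ∈ Finset.range N, α₂ ^ k)) ^ N ≤
      1 - ((∑ k ∈ Finset.Ico 1 N, α₁ ^ k) / (∑ k ∈ Finset.range N, α₁ ^ k)) ^ N := by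
  have hN0 : 0 < N := hN
  have h₂' : 0 ≤ α₂ := le_trans h₁ h₁₂
  -- S(α) ≥ 1
  have hS : ∀ α : ℝ, 0 ≤ α → (1 : ℝ) ≤ ∑ k ∈ Finset.range N, α ^ k := by
    intro α hα
    have := Finset.single_le_sum (f := fun k => α ^ k)
      (fun i _ => pow_nonneg hα i) (Finset.mem_range.2 hN0)
    simpa using this
  have hS₁ := hS α₁ h₁
  have hS₂ := hS α₂ h₂'
  have hS₁pos : (0 : ℝ) < ∑ k ∈ Finset.range N, α₁ ^ k := lt_of_lt_of_le one_pos hS₁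
  have hS₂pos : (0 : ℝ) < ∑ k ∈ Finset.range N, α₂ ^ k := lt_of_lt_of_le one_pos hS₂
  -- S(α₁) ≤ S(α₂)
  have hSle : (∑ k ∈ Finset.range N, α₁ ^ k) ≤ ∑ k ∈ Finset.range N, α₂ ^ k :=
    Finset.sum_le_sum fun i _ => pow_le_pow_left₀ h₁ h₁₂ i
  -- splitting the sum
  have hsplit : ∀ α : ℝ,
      (∑ k ∈ Finset.Ico 1 N, α ^ k) = (∑ k ∈ Finset.range N, α ^ k) - 1 := by
    intro α
    rw [Finset.range_eq_Ico, Finset.sum_eq_sum_Ico_succ_bot hN0]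
    ring
  rw [hsplit α₁, hsplit α₂]
  have hratio : ((∑ k ∈ Finset.range N, α₁ ^ k) - 1) / (∑ k ∈ Finset.range N, α₁ ^ k) ≤
      ((∑ k ∈ Finset.range N, α₂ ^ k) - 1) / (∑ k ∈ Finset.range N, α₂ ^ k) := by
    rw [sub_div, div_self (ne_of_gt hS₁pos), sub_div, div_self (ne_of_gt hS₂pos)]
    have : 1 / (∑ k ∈ Finset.range N, α₂ ^ k) ≤ 1 / (∑ k ∈ Finset.range N, α₁ ^ k) :=
      one_div_le_one_div_of_le hS₁pos hSle
    linarith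
  have hnn : 0 ≤ ((∑ k ∈ Finset.range N, α₁ ^ k) - 1) / (∑ k ∈ Finset.range N, α₁ ^ k) :=
    div_nonneg (by linarith) (le_of_lt hS₁pos)
  have := pow_le_pow_left₀ hnn hratio N
  linarith
end
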